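/- Let A ∈ ℝ^{n×n} with ‖A‖ ≤ 1, let R ∈ ℝ^{n×κm} have full row rank (so R R^† = I where R^† is the Moore-Penrose inverse), and let D > 0. For any z ∈ ℝ^n with |R^† A^κ z| > D, define the one-step image y = A^κ z + R·sat_D(−R^† A^κ z), where sat_D(v) = v if |v| ≤ D and D·v/|v| otherwise. Then |y| − |z| ≤ −D/‖R^†‖. -/
import Mathlib


/-- The Euclidean saturation function at level `D`. -/
noncomputable def sat {d : ℕ} (D : ℝ) (x : EuclideanSpace ℝ (Fin d)) :
    EuclideanSpace ℝ (Fin d) :=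
  if ‖x‖ ≤ D then x else (D / ‖x‖) • x

lemma pow_apply_norm_le {n : ℕ}
    (A : EuclideanSpace ℝ (Fin n) →L[ℝ] EuclideanSpace ℝ (Fin n)) (hA : ‖A‖ ≤ 1)
    (κ : ℕ) (z : EuclideanSpace ℝ (Fin n)) : ‖(A ^ κ) z‖ ≤ ‖z‖ := by
  induction κ with
  | zero => simp
  | succ m ih =>
    have h1 : (A ^ (m+1)) z = A ((A ^ m) z) := by rw [pow_succ']; rfl
    rw [h1]
    calc ‖A ((A ^ m) z)‖ ≤ ‖A‖ * ‖(A ^ m) z‖ := A.le_opNorm _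
      _ ≤ 1 * ‖z‖ := by nlinarith [norm_nonneg ((A ^ m) z)]
      _ = ‖z‖ := one_mul _

theorem stmt_9 {n k : ℕ}
    (A : EuclideanSpace ℝ (Fin n) →L[ℝ] EuclideanSpace ℝ (Fin n)) (hA : ‖A‖ ≤ 1)
    (R : EuclideanSpace ℝ (Fin k) →L[ℝ] EuclideanSpace ℝ (Fin n))
    (Rd : EuclideanSpace ℝ (Fin n) →L[ℝ] EuclideanSpace ℝ (Fin k))
    (hRRd : R.comp Rd = ContinuousLinearMap.id ℝ _)
    (D : ℝ) (hD : 0 < D) (κ : ℕ)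
    (z : EuclideanSpace ℝ (Fin n)) (hz : D < ‖Rd ((A ^ κ) z)‖) :
    ‖(A ^ κ) z + R (sat D (-(Rd ((A ^ κ) z))))‖ - ‖z‖ ≤ -(D / ‖Rd‖) := by
  set w := (A ^ κ) z with hw
  set u := Rd w with hu
  have huD : D < ‖u‖ := hz
  have hu0 : 0 < ‖u‖ := hD.trans huD
  -- sat evaluates to the scaled form
  have hsat : sat D (-u) = (D / ‖u‖) • (-u) := by
    rw [sat, norm_neg, if_neg (not_le.mpr huD)]
  have hRu : R u = w := by
    have := congrArg (fun T => T w) hRRd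
    simpa using this
  have hy : w + R (sat D (-u)) = (1 - D / ‖u‖) • w := by
    rw [hsat, map_smul, map_neg, hRu, sub_smul, one_smul, smul_neg]
    abel
  have hcoef : 0 ≤ 1 - D / ‖u‖ := by
    have : D / ‖u‖ ≤ 1 := (div_le_one hu0).mpr huD.le
    linarith
  have hyn : ‖w + R (sat D (-u))‖ = ‖w‖ - (D / ‖u‖) * ‖w‖ := by
    rw [hy, norm_smul, Real.norm_eq_abs, abs_of_nonneg hcoef]
    ring
  have hw0 : 0 < ‖w‖ := by
    by_contra h
    have : w = 0 := by simpa using norm_le_zero_iff.mp (le_of_not_gt h)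
    rw [hu, this] at hu0
    simp at hu0
  have hRd0 : 0 < ‖Rd‖ := by
    by_contra h
    have h0 : Rd = 0 := norm_le_zero_iff.mp (le_of_not_gt h)
    rw [hu, h0] at hu0
    simp at hu0
  have hub : ‖u‖ ≤ ‖Rd‖ * ‖w‖ := Rd.le_opNorm w
  -- D/‖Rd‖ ≤ (D/‖u‖)*‖w‖
  have key : D / ‖Rd‖ ≤ (D / ‖u‖) * ‖w‖ := by
    rw [div_le_iff₀ hRd0, div_mul_eq_mul_div, div_mul_eq_mul_div, le_div_iff₀ hu0]
    nlinarith
  have hwz : ‖w‖ ≤ ‖z‖ := pow_apply_norm_le A hA κ z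
  rw [hyn]
  linarith
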